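/- arXiv:1207.0184 — 2 statements merged into one kernel-verified Lean document; each statement's English description precedes it below -/
import Mathlib

section
/- Let n ≥ 1 be odd and let w₁ = Y^n x³ - X^n x²y, w₂ = Y^n x²y - X^n xy², w₃ = Y^n xy² - X^n y³ in V_{3,n}. Then w₁, w₂, w₃ are linearly independent, and the linear map V_{3,5n} → V_{0,4n}^{⊕3}, u ↦ (T^{(3,n)}(u,w₁), T^{(3,n)}(u,w₂), T^{(3,n)}(u,w₃)), is surjective. -/
open MvPolynomial

/-- Iterated partial derivative `∂^m/∂(X i)^m` on polynomials in four variables. -/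
noncomputable def pd (i : Fin 4) (m : ℕ) (f : MvPolynomial (Fin 4) ℂ) :
    MvPolynomial (Fin 4) ℂ :=
  (fun g => pderiv i g)^[m] f

/-- The `(r,s)`-th bi-transvectant of bi-forms of bidegrees `(a,b)` and `(a',b')`
in the variables `x = X 0`, `y = X 1` and `X = X 2`, `Y = X 3`:
on pure tensors it is `T^{(r)} ⊠ T^{(s)}`, and explicitly
`T^{(r,s)}(F,G) = ((a-r)!/a!)((a'-r)!/a'!)((b-s)!/b!)((b'-s)!/b'!) ·
  Σ_{k,l} (-1)^{k+l} binom(r,k) binom(s,l)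
    (∂_x^{r-k}∂_y^k ∂_X^{s-l}∂_Y^l F)(∂_x^k ∂_y^{r-k} ∂_X^l ∂_Y^{s-l} G)`. -/
noncomputable def biT (a b a' b' r s : ℕ) (F G : MvPolynomial (Fin 4) ℂ) :
    MvPolynomial (Fin 4) ℂ :=
  (((a - r).factorial : ℂ) / (a.factorial : ℂ) *
      (((a' - r).factorial : ℂ) / (a'.factorial : ℂ)) *
      (((b - s).factorial : ℂ) / (b.factorial : ℂ)) *
      (((b' - s).factorial : ℂ) / (b'.factorial : ℂ))) •
    ∑ k ∈ Finset.range (r + 1), ∑ l ∈ Finset.range (s + 1),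
      ((-1 : ℂ) ^ (k + l) * (r.choose k : ℂ) * (s.choose l : ℂ)) •
        (pd 0 (r - k) (pd 1 k (pd 2 (s - l) (pd 3 l F))) *
          pd 0 k (pd 1 (r - k) (pd 2 l (pd 3 (s - l) G))))

/-- The space `V_{a,b}` of bi-forms of bidegree `(a,b)` on `ℙ¹×ℙ¹`, realized as the
span of the monomials `x^i y^{a-i} X^j Y^{b-j}`. -/
noncomputable def Vab (a b : ℕ) : Submodule ℂ (MvPolynomial (Fin 4) ℂ) :=
  Submodule.span ℂ
    {p | ∃ i ≤ a, ∃ j ≤ b, p = X 0 ^ i * X 1 ^ (a - i) * X 2 ^ j * X 3 ^ (b - j)}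

/-! Against a bi-form of full bidegree `(r, s)` the transvectant `T^{(r,s)}` is a
constant-coefficient differential operator, and on products of a form in `x, y` with a form in
`X, Y` it factors as `T^{(r)} ⊠ T^{(s)}`. For `u = x²y B + xy² C + y³ D` with `B, C, D ∈ V_{0,5n}`
and `K = (4n)!/(5n)!` this gives
  `T(u, w₁) = -K (∂_Xⁿ D + (-1)ⁿ/3 ∂_Yⁿ C)`,
  `T(u, w₂) = K/3 (∂_Xⁿ C + (-1)ⁿ ∂_Yⁿ B)`,
  `T(u, w₃) = -K/3 ∂_Xⁿ B`,
and since `∂_Xⁿ` maps `V_{0,5n}` onto `V_{0,4n}` this triangular system is solved for `B`, then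
`C`, then `D`. Solving it for the targets `(X⁴ⁿ, 0, 0)`, `(0, X⁴ⁿ, 0)`, `(0, 0, X⁴ⁿ)` gives
functionals `T(uᵢ, ·)` dual to the `wᵢ`, hence their linear independence. -/

open Nat

variable {i j : Fin 4} {f f' g g' : MvPolynomial (Fin 4) ℂ}

theorem pd_eq_coe_pow (i : Fin 4) (m : ℕ) : pd i m = ⇑((pderiv (R := ℂ) i).toLinearMap ^ m) := by
  funext f
  rw [Module.End.pow_apply]
  rfl

@[simp] theorem pd_zero (i : Fin 4) (f : MvPolynomial (Fin 4) ℂ) : pd i 0 f = f := rfl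

theorem pd_succ (i : Fin 4) (m : ℕ) (f : MvPolynomial (Fin 4) ℂ) :
    pd i (m + 1) f = pderiv i (pd i m f) :=
  Function.iterate_succ_apply' _ _ _

theorem pd_smul (i : Fin 4) (m : ℕ) (c : ℂ) (f : MvPolynomial (Fin 4) ℂ) :
    pd i m (c • f) = c • pd i m f := by
  rw [pd_eq_coe_pow, map_smul]

theorem pd_mul_of_pderiv_right_eq_zero (m : ℕ) (hg : pderiv i g = 0) :
    pd i m (f * g) = pd i m f * g := by
  induction m with
  | zero => rfl
  | succ m ih => simp [pd_succ, ih, hg, mul_comm]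

theorem pd_mul_of_pderiv_left_eq_zero (m : ℕ) (hf : pderiv i f = 0) :
    pd i m (f * g) = f * pd i m g := by
  rw [mul_comm, pd_mul_of_pderiv_right_eq_zero m hf, mul_comm]

theorem pd_X_pow (i : Fin 4) (k m : ℕ) :
    pd i m (X i ^ k) = (k.descFactorial m : ℂ) • X i ^ (k - m) := by
  induction m with
  | zero => simp
  | succ m ih =>
    rw [pd_succ, ih, Derivation.map_smul, pderiv_pow, pderiv_X_self, Nat.descFactorial_succ,
      Nat.sub_sub, smul_eq_C_mul, smul_eq_C_mul]
    push_cast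
    simp only [map_mul, map_natCast]
    ring

theorem pderiv_X_pow_of_ne (hij : j ≠ i) (k : ℕ) :
    pderiv i (X j ^ k : MvPolynomial (Fin 4) ℂ) = 0 := by
  simp [pderiv_X_of_ne hij]

theorem pd_pd_X_pow_mul_X_pow (hij : i ≠ j) (c d k l : ℕ) :
    pd i k (pd j l (X i ^ c * X j ^ d)) =
      ((c.descFactorial k * d.descFactorial l : ℕ) : ℂ) • (X i ^ (c - k) * X j ^ (d - l)) := by
  rw [pd_mul_of_pderiv_left_eq_zero l (pderiv_X_pow_of_ne hij c), pd_X_pow, mul_smul_comm,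
    pd_smul, pd_mul_of_pderiv_right_eq_zero k (pderiv_X_pow_of_ne hij.symm _), pd_X_pow,
    smul_mul_assoc, smul_smul, Nat.cast_mul, mul_comm]

theorem monomial_mem_Vab {a b k l : ℕ} (hk : k ≤ a) (hl : l ≤ b) :
    X 0 ^ k * X 1 ^ (a - k) * X 2 ^ l * X 3 ^ (b - l) ∈ Vab a b :=
  Submodule.subset_span ⟨k, hk, l, hl, rfl⟩

theorem X_zero_pow_mul_X_one_pow_mem_Vab {a k l : ℕ} (h : k + l = a) :
    (X 0 ^ k * X 1 ^ l : MvPolynomial (Fin 4) ℂ) ∈ Vab a 0 := by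
  simpa [← h] using monomial_mem_Vab (a := k + l) (b := 0) (Nat.le_add_right k l) le_rfl

theorem X_two_pow_mul_X_three_pow_mem_Vab {b k l : ℕ} (h : k + l = b) :
    (X 2 ^ k * X 3 ^ l : MvPolynomial (Fin 4) ℂ) ∈ Vab 0 b := by
  simpa [← h] using monomial_mem_Vab (a := 0) (b := k + l) le_rfl (Nat.le_add_right k l)

theorem pderiv_eq_zero_of_mem_Vab_zero_left {b : ℕ} (hi : i = 0 ∨ i = 1) (hf : f ∈ Vab 0 b) :
    pderiv i f = 0 := by
  induction hf using Submodule.span_induction with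
  | mem p hp =>
    obtain ⟨k, hk, l, -, rfl⟩ := hp
    obtain rfl : k = 0 := by omega
    rcases hi with rfl | rfl <;> simp
  | zero => simp
  | add p q _ _ hp hq => simp [hp, hq]
  | smul c p _ hp => simp [hp]

theorem pderiv_eq_zero_of_mem_Vab_zero_right {a : ℕ} (hi : i = 2 ∨ i = 3) (hf : f ∈ Vab a 0) :
    pderiv i f = 0 := by
  induction hf using Submodule.span_induction with
  | mem p hp =>
    obtain ⟨k, -, l, hl, rfl⟩ := hp
    obtain rfl : l = 0 := by omega
    rcases hi with rfl | rfl <;> simp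
  | zero => simp
  | add p q _ _ hp hq => simp [hp, hq]
  | smul c p _ hp => simp [hp]

theorem mul_mem_Vab {a b : ℕ} (hf : f ∈ Vab a 0) (hg : g ∈ Vab 0 b) : f * g ∈ Vab a b := by
  have hle : Vab a 0 * Vab 0 b ≤ Vab a b := by
    rw [Vab, Vab, Submodule.span_mul_span]
    refine Submodule.span_mono ?_
    rintro _ ⟨_, ⟨k, hk, j, hj, rfl⟩, _, ⟨k', hk', l, hl, rfl⟩, rfl⟩
    obtain rfl : j = 0 := by omega
    obtain rfl : k' = 0 := by omega
    exact ⟨k, hk, l, hl, by ring⟩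
  exact hle (Submodule.mul_mem_mul hf hg)

theorem pd_mem_of_forall_monomial_mem {a b : ℕ} {N : Submodule ℂ (MvPolynomial (Fin 4) ℂ)}
    (m : ℕ) (h : ∀ k ≤ a, ∀ l ≤ b, pd i m (X 0 ^ k * X 1 ^ (a - k) * X 2 ^ l * X 3 ^ (b - l)) ∈ N)
    (hf : f ∈ Vab a b) : pd i m f ∈ N := by
  rw [pd_eq_coe_pow] at h ⊢
  refine (Submodule.span_le (p := N.comap _)).mpr ?_ hf
  rintro _ ⟨k, hk, l, hl, rfl⟩
  exact h k hk l hl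

theorem pd_two_mem_Vab {a b : ℕ} (m : ℕ) (hf : f ∈ Vab a b) : pd 2 m f ∈ Vab a (b - m) := by
  refine pd_mem_of_forall_monomial_mem m (fun k hk l hl => ?_) hf
  rw [pd_mul_of_pderiv_right_eq_zero m (pderiv_X_pow_of_ne (by decide) _),
    pd_mul_of_pderiv_left_eq_zero m (by simp), pd_X_pow]
  rcases le_or_gt m l with hml | hlm
  · have := monomial_mem_Vab (a := a) (b := b - m) hk (Nat.sub_le_sub_right hl m)
    rw [show b - m - (l - m) = b - l by omega] at this
    simpa [mul_smul_comm, smul_mul_assoc] using Submodule.smul_mem _ _ this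
  · simp [Nat.descFactorial_eq_zero_iff_lt.mpr hlm]

theorem pd_three_mem_Vab {a b : ℕ} (m : ℕ) (hf : f ∈ Vab a b) : pd 3 m f ∈ Vab a (b - m) := by
  refine pd_mem_of_forall_monomial_mem m (fun k hk l hl => ?_) hf
  rw [pd_mul_of_pderiv_left_eq_zero m (by simp), pd_X_pow]
  rcases le_or_gt m (b - l) with hml | hlm
  · have := monomial_mem_Vab (a := a) (b := b - m) hk (show l ≤ b - m by omega)
    rw [show b - m - l = b - l - m by omega] at this
    simpa [mul_smul_comm] using Submodule.smul_mem _ _ this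
  · simp [Nat.descFactorial_eq_zero_iff_lt.mpr hlm]

theorem exists_pd_two_eq {a b : ℕ} (m : ℕ) (hf : f ∈ Vab a b) :
    ∃ g ∈ Vab a (b + m), pd 2 m g = f := by
  induction hf using Submodule.span_induction with
  | mem p hp =>
    obtain ⟨k, hk, l, hl, rfl⟩ := hp
    refine ⟨((l + m).descFactorial m : ℂ)⁻¹ •
      (X 0 ^ k * X 1 ^ (a - k) * X 2 ^ (l + m) * X 3 ^ (b + m - (l + m))),
      Submodule.smul_mem _ _ (monomial_mem_Vab hk (by omega)), ?_⟩
    rw [pd_smul, pd_mul_of_pderiv_right_eq_zero m (pderiv_X_pow_of_ne (by decide) _),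
      pd_mul_of_pderiv_left_eq_zero m (by simp), pd_X_pow, mul_smul_comm,
      smul_mul_assoc, smul_smul, inv_mul_cancel₀ (by simp [Nat.descFactorial_eq_zero_iff_lt]),
      one_smul, show b + m - (l + m) = b - l by omega, Nat.add_sub_cancel]
  | zero => exact ⟨0, zero_mem _, by simp [pd_eq_coe_pow]⟩
  | add p q _ _ hp hq =>
    obtain ⟨g, hg, rfl⟩ := hp
    obtain ⟨g', hg', rfl⟩ := hq
    exact ⟨g + g', add_mem hg hg', by simp [pd_eq_coe_pow]⟩
  | smul c p _ hp =>
    obtain ⟨g, hg, rfl⟩ := hp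
    exact ⟨c • g, Submodule.smul_mem _ c hg, pd_smul 2 m c g⟩

noncomputable def transvectant (i j : Fin 4) (a a' r : ℕ) (F G : MvPolynomial (Fin 4) ℂ) :
    MvPolynomial (Fin 4) ℂ :=
  (((a - r)! : ℂ) / a ! * (((a' - r)! : ℂ) / a' !)) •
    ∑ k ∈ Finset.range (r + 1), ((-1 : ℂ) ^ k * r.choose k) •
      (pd i (r - k) (pd j k F) * pd i k (pd j (r - k) G))

theorem pd_pd_pd_pd_mul {a b : ℕ} (hf : f ∈ Vab a 0) (hg : g ∈ Vab 0 b) (k l p q : ℕ) :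
    pd 0 k (pd 1 l (pd 2 p (pd 3 q (f * g)))) = pd 0 k (pd 1 l f) * pd 2 p (pd 3 q g) := by
  have hg' : pd 2 p (pd 3 q g) ∈ Vab 0 (b - q - p) := pd_two_mem_Vab p (pd_three_mem_Vab q hg)
  rw [pd_mul_of_pderiv_left_eq_zero q (pderiv_eq_zero_of_mem_Vab_zero_right (by simp) hf),
    pd_mul_of_pderiv_left_eq_zero p (pderiv_eq_zero_of_mem_Vab_zero_right (by simp) hf),
    pd_mul_of_pderiv_right_eq_zero l (pderiv_eq_zero_of_mem_Vab_zero_left (by simp) hg'),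
    pd_mul_of_pderiv_right_eq_zero k (pderiv_eq_zero_of_mem_Vab_zero_left (by simp) hg')]

theorem biT_mul_mul {a a' b b' r s : ℕ} (hf : f ∈ Vab a 0) (hf' : f' ∈ Vab a' 0)
    (hg : g ∈ Vab 0 b) (hg' : g' ∈ Vab 0 b') :
    biT a b a' b' r s (f * g) (f' * g') =
      transvectant 0 1 a a' r f f' * transvectant 2 3 b b' s g g' := by
  simp only [biT, transvectant, pd_pd_pd_pd_mul hf hg, pd_pd_pd_pd_mul hf' hg',
    smul_mul_smul_comm, Finset.sum_mul_sum]
  refine congrArg₂ (· • ·) (by ring)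
    (Finset.sum_congr rfl fun k _ => Finset.sum_congr rfl fun l _ => ?_)
  rw [pow_add]
  exact congrArg₂ (· • ·) (by ring) (by ring)

theorem transvectant_X_pow_mul_X_pow (hij : i ≠ j) {a r c : ℕ} (hc : c ≤ r)
    (F : MvPolynomial (Fin 4) ℂ) :
    transvectant i j a r r F (X i ^ c * X j ^ (r - c)) =
      (((a - r)! : ℂ) / a ! * (-1) ^ c) • pd i (r - c) (pd j c F) := by
  have hG : ∀ k ≤ r, k ≠ c → pd i k (pd j (r - k) (X i ^ c * X j ^ (r - c))) = 0 := by
    intro k hk hkc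
    rw [pd_pd_X_pow_mul_X_pow hij, Nat.cast_eq_zero.mpr, zero_smul]
    rcases lt_or_gt_of_ne hkc with h | h
    · exact mul_eq_zero_of_right _ (Nat.descFactorial_eq_zero_iff_lt.mpr (by omega))
    · exact mul_eq_zero_of_left (Nat.descFactorial_eq_zero_iff_lt.mpr h) _
  rw [transvectant, Finset.sum_eq_single_of_mem c (by simp; omega)
    (fun k hk hkc => by rw [hG k (by simpa [Nat.lt_succ_iff] using hk) hkc, mul_zero, smul_zero])]
  simp only [pd_pd_X_pow_mul_X_pow hij, Nat.descFactorial_self, Nat.sub_self, pow_zero,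
    mul_one, mul_smul_comm, smul_smul]
  congr 1
  have hr : ((r.choose c * c ! * (r - c)! : ℕ) : ℂ) = r ! := by
    rw [Nat.choose_mul_factorial_mul_factorial hc]
  push_cast at hr ⊢
  have hchoose : (r.choose c : ℂ) ≠ 0 := by exact_mod_cast (Nat.choose_pos hc).ne'
  have hfac (m : ℕ) : (m ! : ℂ) ≠ 0 := by exact_mod_cast m.factorial_ne_zero
  rw [← hr, Nat.factorial_zero, Nat.cast_one]
  field_simp [hfac c, hfac (r - c)]

theorem transvectant_X_pow_mul_X_pow_X_pow_mul_X_pow (hij : i ≠ j) {r a c : ℕ} (ha : a ≤ r)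
    (hc : c ≤ r) :
    transvectant i j r r r (X i ^ a * X j ^ (r - a)) (X i ^ c * X j ^ (r - c)) =
      if a + c = r then ((-1) ^ c / r.choose c : ℂ) • 1 else 0 := by
  rw [transvectant_X_pow_mul_X_pow hij hc, pd_pd_X_pow_mul_X_pow hij, smul_smul]
  split_ifs with hac
  · obtain rfl : a = r - c := by omega
    have hr : ((r.choose c * c ! * (r - c)! : ℕ) : ℂ) = r ! := by
      rw [Nat.choose_mul_factorial_mul_factorial hc]
    have hchoose : (r.choose c : ℂ) ≠ 0 := by exact_mod_cast (Nat.choose_pos hc).ne'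
    have hfac (m : ℕ) : (m ! : ℂ) ≠ 0 := by exact_mod_cast m.factorial_ne_zero
    simp only [Nat.descFactorial_self, Nat.sub_self, Nat.sub_sub_self hc, pow_zero, mul_one]
    push_cast at hr ⊢
    rw [← hr, Nat.factorial_zero, Nat.cast_one]
    congr 1
    field_simp [hfac c, hfac (r - c)]
  · have h0 : a.descFactorial (r - c) * (r - a).descFactorial c = 0 := by
      rcases lt_or_gt_of_ne hac with h | h
      · exact mul_eq_zero_of_left (Nat.descFactorial_eq_zero_iff_lt.mpr (by omega)) _
      · exact mul_eq_zero_of_right _ (Nat.descFactorial_eq_zero_iff_lt.mpr (by omega))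
    rw [h0, Nat.cast_zero, mul_zero, zero_smul]

theorem biT_cubic_monomial_mul {n a a' c c' m m' : ℕ} {U : MvPolynomial (Fin 4) ℂ}
    (hU : U ∈ Vab 0 (5 * n))
    (ha : a + a' = 3) (hc : c + c' = 3) (hm : m + m' = n) :
    biT 3 (5 * n) 3 n 3 n (X 0 ^ a * X 1 ^ a' * U) (X 0 ^ c * X 1 ^ c' * (X 2 ^ m * X 3 ^ m')) =
      if a + c = 3 then
        ((-1) ^ (c + m) / (3 : ℕ).choose c * ((4 * n)! / (5 * n)!) : ℂ) • pd 2 m' (pd 3 m U)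
      else 0 := by
  obtain rfl : a' = 3 - a := by omega
  obtain rfl : c' = 3 - c := by omega
  obtain rfl : m' = n - m := by omega
  rw [biT_mul_mul (X_zero_pow_mul_X_one_pow_mem_Vab ha) (X_zero_pow_mul_X_one_pow_mem_Vab hc) hU
      (X_two_pow_mul_X_three_pow_mem_Vab hm),
    transvectant_X_pow_mul_X_pow_X_pow_mul_X_pow (by decide) (by omega) (by omega),
    transvectant_X_pow_mul_X_pow (by decide) (by omega), show 5 * n - n = 4 * n by omega]
  split_ifs
  · rw [smul_mul_smul_comm, one_mul, pow_add]
    congr 1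
    ring
  · rw [zero_mul]

theorem biT_add_left (a b a' b' r s : ℕ) (F F' G : MvPolynomial (Fin 4) ℂ) :
    biT a b a' b' r s (F + F') G = biT a b a' b' r s F G + biT a b a' b' r s F' G := by
  simp only [biT, pd_eq_coe_pow, map_add, add_mul, smul_add, Finset.sum_add_distrib]

@[simps]
noncomputable def biTRight (a b a' b' r s : ℕ) (F : MvPolynomial (Fin 4) ℂ) :
    MvPolynomial (Fin 4) ℂ →ₗ[ℂ] MvPolynomial (Fin 4) ℂ where
  toFun := biT a b a' b' r s F
  map_add' G G' := by
    simp only [biT, pd_eq_coe_pow, map_add, mul_add, smul_add, Finset.sum_add_distrib]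
  map_smul' c G := by
    simp only [biT, pd_eq_coe_pow, map_smul, mul_smul_comm, Finset.smul_sum, smul_comm c,
      RingHom.id_apply]

theorem biT_sub_right (a b a' b' r s : ℕ) (F G G' : MvPolynomial (Fin 4) ℂ) :
    biT a b a' b' r s F (G - G') = biT a b a' b' r s F G - biT a b a' b' r s F G' :=
  map_sub (biTRight a b a' b' r s F) G G'

theorem exists_biT_eq {n : ℕ} {t₁ t₂ t₃ : MvPolynomial (Fin 4) ℂ} (h₁ : t₁ ∈ Vab 0 (4 * n))
    (h₂ : t₂ ∈ Vab 0 (4 * n)) (h₃ : t₃ ∈ Vab 0 (4 * n)) :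
    ∃ u ∈ Vab 3 (5 * n),
      biT 3 (5 * n) 3 n 3 n u (X 3 ^ n * X 0 ^ 3 - X 2 ^ n * (X 0 ^ 2 * X 1)) = t₁ ∧
      biT 3 (5 * n) 3 n 3 n u (X 3 ^ n * (X 0 ^ 2 * X 1) - X 2 ^ n * (X 0 * X 1 ^ 2)) = t₂ ∧
      biT 3 (5 * n) 3 n 3 n u (X 3 ^ n * (X 0 * X 1 ^ 2) - X 2 ^ n * X 1 ^ 3) = t₃ := by
  set K : ℂ := (4 * n)! / (5 * n)! with hK_def
  have hK : K ≠ 0 := div_ne_zero (by exact_mod_cast (4 * n).factorial_ne_zero)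
    (by exact_mod_cast (5 * n).factorial_ne_zero)
  have h5 : 4 * n + n = 5 * n := by omega
  have hY {U : MvPolynomial (Fin 4) ℂ} (hU : U ∈ Vab 0 (5 * n)) : pd 3 n U ∈ Vab 0 (4 * n) := by
    simpa [show 5 * n - n = 4 * n by omega] using pd_three_mem_Vab n hU
  obtain ⟨B, hB, hB'⟩ := exists_pd_two_eq n (Submodule.smul_mem _ (-3 / K) h₃)
  rw [h5] at hB
  obtain ⟨C, hC, hC'⟩ := exists_pd_two_eq n
    (sub_mem (Submodule.smul_mem _ (3 / K) h₂) (Submodule.smul_mem _ ((-1) ^ n) (hY hB)))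
  rw [h5] at hC
  obtain ⟨D, hD, hD'⟩ := exists_pd_two_eq n
    (sub_mem (Submodule.smul_mem _ (-1 / K) h₁) (Submodule.smul_mem _ ((-1) ^ n / 3) (hY hC)))
  rw [h5] at hD
  have hw₁ : (X 3 ^ n * X 0 ^ 3 - X 2 ^ n * (X 0 ^ 2 * X 1) : MvPolynomial (Fin 4) ℂ) =
      X 0 ^ 3 * X 1 ^ 0 * (X 2 ^ 0 * X 3 ^ n) - X 0 ^ 2 * X 1 ^ 1 * (X 2 ^ n * X 3 ^ 0) := by
    ring
  have hw₂ : (X 3 ^ n * (X 0 ^ 2 * X 1) - X 2 ^ n * (X 0 * X 1 ^ 2) : MvPolynomial (Fin 4) ℂ) =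
      X 0 ^ 2 * X 1 ^ 1 * (X 2 ^ 0 * X 3 ^ n) - X 0 ^ 1 * X 1 ^ 2 * (X 2 ^ n * X 3 ^ 0) := by
    ring
  have hw₃ : (X 3 ^ n * (X 0 * X 1 ^ 2) - X 2 ^ n * X 1 ^ 3 : MvPolynomial (Fin 4) ℂ) =
      X 0 ^ 1 * X 1 ^ 2 * (X 2 ^ 0 * X 3 ^ n) - X 0 ^ 0 * X 1 ^ 3 * (X 2 ^ n * X 3 ^ 0) := by
    ring
  refine ⟨X 0 ^ 2 * X 1 ^ 1 * B + X 0 ^ 1 * X 1 ^ 2 * C + X 0 ^ 0 * X 1 ^ 3 * D,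
    add_mem (add_mem (mul_mem_Vab (X_zero_pow_mul_X_one_pow_mem_Vab rfl) hB)
      (mul_mem_Vab (X_zero_pow_mul_X_one_pow_mem_Vab rfl) hC))
      (mul_mem_Vab (X_zero_pow_mul_X_one_pow_mem_Vab rfl) hD), ?_, ?_, ?_⟩ <;>
  · simp (disch := omega) only [hw₁, hw₂, hw₃, biT_add_left, biT_sub_right,
      biT_cubic_monomial_mul hB, biT_cubic_monomial_mul hC, biT_cubic_monomial_mul hD]
    norm_num [hB', hC', hD', ← hK_def]
    match_scalars <;> field_simp <;> ring

theorem linearIndependent_w (n : ℕ) :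
    LinearIndependent ℂ
      (![X 3 ^ n * X 0 ^ 3 - X 2 ^ n * (X 0 ^ 2 * X 1),
        X 3 ^ n * (X 0 ^ 2 * X 1) - X 2 ^ n * (X 0 * X 1 ^ 2),
        X 3 ^ n * (X 0 * X 1 ^ 2) - X 2 ^ n * X 1 ^ 3] : Fin 3 → MvPolynomial (Fin 4) ℂ) := by
  have hv : (X 2 ^ (4 * n) : MvPolynomial (Fin 4) ℂ) ∈ Vab 0 (4 * n) := by
    simpa using X_two_pow_mul_X_three_pow_mem_Vab (add_zero (4 * n))
  obtain ⟨u₁, -, h₁₁, h₁₂, h₁₃⟩ := exists_biT_eq hv (zero_mem _) (zero_mem _)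
  obtain ⟨u₂, -, h₂₁, h₂₂, h₂₃⟩ := exists_biT_eq (zero_mem _) hv (zero_mem _)
  obtain ⟨u₃, -, h₃₁, h₃₂, h₃₃⟩ := exists_biT_eq (zero_mem _) (zero_mem _) hv
  refine .of_pairwise_dual_eq_zero_one _ (fun i => (aeval fun _ => (1 : ℂ)).toLinearMap ∘ₗ
    biTRight 3 (5 * n) 3 n 3 n (![u₁, u₂, u₃] i)) ?_ ?_
  · intro i j hij
    fin_cases i <;> fin_cases j <;> simp_all
  · intro i
    fin_cases i <;> simp_all

theorem case_b0_Tw_surjective_general (n : ℕ) :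
    LinearIndependent ℂ
      (![X 3 ^ n * X 0 ^ 3 - X 2 ^ n * (X 0 ^ 2 * X 1),
        X 3 ^ n * (X 0 ^ 2 * X 1) - X 2 ^ n * (X 0 * X 1 ^ 2),
        X 3 ^ n * (X 0 * X 1 ^ 2) - X 2 ^ n * X 1 ^ 3] : Fin 3 → MvPolynomial (Fin 4) ℂ) ∧
    ∀ u₁ ∈ Vab 0 (4 * n), ∀ u₂ ∈ Vab 0 (4 * n), ∀ u₃ ∈ Vab 0 (4 * n),
      ∃ u ∈ Vab 3 (5 * n),
        biT 3 (5 * n) 3 n 3 n u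
            (X 3 ^ n * X 0 ^ 3 - X 2 ^ n * (X 0 ^ 2 * X 1)) = u₁ ∧
        biT 3 (5 * n) 3 n 3 n u
            (X 3 ^ n * (X 0 ^ 2 * X 1) - X 2 ^ n * (X 0 * X 1 ^ 2)) = u₂ ∧
        biT 3 (5 * n) 3 n 3 n u
            (X 3 ^ n * (X 0 * X 1 ^ 2) - X 2 ^ n * X 1 ^ 3) = u₃ :=
  ⟨linearIndependent_w n, fun _ h₁ _ h₂ _ h₃ => exists_biT_eq h₁ h₂ h₃⟩

/-- §4.1, case `b ≡ 0 (mod 5)`: for `n` odd, the vectors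
`w₁ = Yⁿx³ − Xⁿx²y`, `w₂ = Yⁿx²y − Xⁿxy²`, `w₃ = Yⁿxy² − Xⁿy³` in `V_{3,n}`
are linearly independent, and the map
`V_{3,5n} → V_{0,4n}^{⊕3}`, `u ↦ (T^{(3,n)}(u,w₁), T^{(3,n)}(u,w₂), T^{(3,n)}(u,w₃))`,
is surjective. -/
theorem case_b0_Tw_surjective (n : ℕ) (hn : Odd n) :
    LinearIndependent ℂ
      (![X 3 ^ n * X 0 ^ 3 - X 2 ^ n * (X 0 ^ 2 * X 1),
        X 3 ^ n * (X 0 ^ 2 * X 1) - X 2 ^ n * (X 0 * X 1 ^ 2),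
        X 3 ^ n * (X 0 * X 1 ^ 2) - X 2 ^ n * X 1 ^ 3] : Fin 3 → MvPolynomial (Fin 4) ℂ) ∧
    ∀ u₁ ∈ Vab 0 (4 * n), ∀ u₂ ∈ Vab 0 (4 * n), ∀ u₃ ∈ Vab 0 (4 * n),
      ∃ u ∈ Vab 3 (5 * n),
        biT 3 (5 * n) 3 n 3 n u
            (X 3 ^ n * X 0 ^ 3 - X 2 ^ n * (X 0 ^ 2 * X 1)) = u₁ ∧
        biT 3 (5 * n) 3 n 3 n u
            (X 3 ^ n * (X 0 ^ 2 * X 1) - X 2 ^ n * (X 0 * X 1 ^ 2)) = u₂ ∧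
        biT 3 (5 * n) 3 n 3 n u
            (X 3 ^ n * (X 0 * X 1 ^ 2) - X 2 ^ n * X 1 ^ 3) = u₃ :=
  case_b0_Tw_surjective_general n
end

section
/- Let n ≥ 3 be odd and set v = X^n Y^{4n+2} x³ + X^{2n+1}Y^{3n+1} x²y + X^{3n+1}Y^{2n+1} xy² + X^{4n+2}Y^n y³ ∈ V_{3,5n+2}, and w = Y^n x²y - X^n xy² ∈ V_{3,n}. Then: (a) T^{(3,n)}(v, w) = 0; (b) T^{(3,n)}(v, ·) : V_{3,n} → V_{0,4n+2} is surjective; (c) T^{(3,n)}(·, w) : V_{3,5n+2} → V_{0,4n+2} is surjective. -/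
open MvPolynomial

/-!
On monomials the double sum defining `T^{(r,s)}` collapses when the first argument has
`(x,y)`-degree `r` and the second has `(X,Y)`-degree `s`: the mixed derivatives of total order
equal to the degree kill every monomial but one, so only the term `k = r - i`, `l = J'` survives,
and `T(x^i y^{r-i} X^J Y^K, x^{r-i} y^i X^{J'} Y^{s-J'})` is an explicit multiple of
`X^{J+J'-s} Y^{K-J'}`, nonzero whenever these exponents are nonnegative, while `T` vanishes
on monomial pairs whose `x`-degrees do not add up to `r`.

Hence each monomial of `w` meets exactly one monomial of `v`; both products are multiples of
`X^{2n+1} Y^{2n+1}`, with signs `(-1)^2` and `(-1)^{n+1}`, so they cancel for odd `n`.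
The monomial of `v` with `X`-exponent `J` reaches the targets `X^j Y^{4n+2-j}` with
`J - n ≤ j ≤ J`, and these four intervals cover `[0, 4n+2]`; finally `x²y X^j Y^{5n+2-j}`
against `w` gives a nonzero multiple of `X^j Y^{4n+2-j}`.
-/

theorem pd_eq_pow (i : Fin 4) (m : ℕ) : pd i m = ⇑((pderiv i).toLinearMap ^ m) :=
  (Module.End.coe_pow _ m).symm

theorem pd_monomial (i : Fin 4) (m : ℕ) (e : Fin 4 →₀ ℕ) (c : ℂ) :
    pd i m (monomial e c) =
      monomial (e - Finsupp.single i m) (c * (e i).descFactorial m) := by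
  induction m with
  | zero => simp [pd]
  | succ m ih =>
    rw [pd, Function.iterate_succ_apply', ← pd, ih, pderiv_monomial, tsub_tsub,
      ← Finsupp.single_add, Finsupp.tsub_apply, Finsupp.single_eq_same, Nat.descFactorial_succ]
    exact congr_arg _ (by push_cast; ring)

noncomputable def bimono (i j k l : ℕ) : MvPolynomial (Fin 4) ℂ :=
  X 0 ^ i * X 1 ^ j * X 2 ^ k * X 3 ^ l

theorem bimono_eq_monomial (i j k l : ℕ) :
    bimono i j k l = monomial (Finsupp.single 0 i + Finsupp.single 1 j + Finsupp.single 2 k +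
      Finsupp.single 3 l) 1 := by
  simp only [bimono, X_pow_eq_monomial, monomial_mul, mul_one]

theorem bimono_mul (i j k l i' j' k' l' : ℕ) :
    bimono i j k l * bimono i' j' k' l' = bimono (i + i') (j + j') (k + k') (l + l') := by
  simp only [bimono, pow_add]
  ring

theorem pd_bimono (a b c d i j k l : ℕ) :
    pd 0 a (pd 1 b (pd 2 c (pd 3 d (bimono i j k l)))) =
      ((i.descFactorial a * j.descFactorial b * k.descFactorial c * l.descFactorial d : ℕ) : ℂ) •
        bimono (i - a) (j - b) (k - c) (l - d) := by
  rw [bimono_eq_monomial, bimono_eq_monomial]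
  simp only [pd_monomial, smul_monomial]
  refine congr_arg₂ (fun e c => monomial e c) (Finsupp.ext fun x => ?_) ?_
  · fin_cases x <;> simp
  · simp
    ring

theorem pd_bimono_eq_zero (a b c d i j k l : ℕ)
    (h : i.descFactorial a * j.descFactorial b = 0 ∨ k.descFactorial c * l.descFactorial d = 0) :
    pd 0 a (pd 1 b (pd 2 c (pd 3 d (bimono i j k l)))) = 0 := by
  rw [pd_bimono, mul_assoc (i.descFactorial a * j.descFactorial b)]
  rcases h with h | h <;> simp [h]

theorem Nat.descFactorial_mul_descFactorial_eq_zero {a b c d : ℕ} (h : a + b = c + d)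
    (hac : a ≠ c) : a.descFactorial c * b.descFactorial d = 0 := by
  rcases hac.lt_or_gt with hlt | hgt
  · rw [Nat.descFactorial_eq_zero_iff_lt.mpr hlt, zero_mul]
  · rw [Nat.descFactorial_eq_zero_iff_lt.mpr (show b < d by omega), mul_zero]

noncomputable def biTₗ (a b a' b' r s : ℕ) :
    MvPolynomial (Fin 4) ℂ →ₗ[ℂ] MvPolynomial (Fin 4) ℂ →ₗ[ℂ] MvPolynomial (Fin 4) ℂ :=
  LinearMap.mk₂ ℂ (biT a b a' b' r s)
    (fun _ _ _ => by simp [biT, pd_eq_pow, add_mul, Finset.sum_add_distrib])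
    (fun c _ _ => by
      simp only [biT, pd_eq_pow, map_smul, smul_mul_assoc, Finset.smul_sum, smul_comm c])
    (fun _ _ _ => by simp [biT, pd_eq_pow, mul_add, Finset.sum_add_distrib])
    (fun c _ _ => by
      simp only [biT, pd_eq_pow, map_smul, mul_smul_comm, Finset.smul_sum, smul_comm c])

theorem biTₗ_apply (a b a' b' r s : ℕ) (F G : MvPolynomial (Fin 4) ℂ) :
    biTₗ a b a' b' r s F G = biT a b a' b' r s F G := rfl

theorem biT_bimono_eq_zero (r s B i j J K i' j' J' K' : ℕ) (hij : i + j = r)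
    (hij' : i' + j' = r) (hii' : i + i' ≠ r) :
    biT r B r s r s (bimono i j J K) (bimono i' j' J' K') = 0 := by
  unfold biT
  refine smul_eq_zero_of_right _
    (Finset.sum_eq_zero fun k hk => Finset.sum_eq_zero fun l _ => ?_)
  have := Finset.mem_range.mp hk
  by_cases hik : i = r - k
  · rw [pd_bimono_eq_zero _ _ _ _ i' _ _ _
      (.inl (Nat.descFactorial_mul_descFactorial_eq_zero (by omega) (by omega))), mul_zero,
      smul_zero]
  · rw [pd_bimono_eq_zero _ _ _ _ i _ _ _
      (.inl (Nat.descFactorial_mul_descFactorial_eq_zero (by omega) hik)), zero_mul, smul_zero]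

-- The surviving term of `biT`, simplified by `C(r,i) i! (r-i)! = r!`, `C(s,J') J'! (s-J')! = s!`.
noncomputable def biTCoeff (r s B i J K J' : ℕ) : ℂ :=
  (-1) ^ (r - i + J') * ((B - s).factorial / B.factorial : ℂ) *
    J.descFactorial (s - J') * K.descFactorial J' / r.choose i

theorem biTCoeff_ne_zero (r s B i J K J' : ℕ) (hi : i ≤ r) (hJ : s - J' ≤ J) (hK : J' ≤ K) :
    biTCoeff r s B i J K J' ≠ 0 := by
  have := Nat.choose_pos hi
  simp [biTCoeff, Nat.factorial_ne_zero, Nat.descFactorial_eq_zero_iff_lt]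
  omega

theorem biT_bimono (r s B i J K J' : ℕ) (hi : i ≤ r) (hJ' : J' ≤ s) :
    biT r B r s r s (bimono i (r - i) J K) (bimono (r - i) i J' (s - J')) =
      biTCoeff r s B i J K J' • bimono 0 0 (J - (s - J')) (K - J') := by
  unfold biT
  rw [Finset.sum_eq_single_of_mem (r - i) (Finset.mem_range.mpr (by omega)) fun k hk hki => ?_,
    Finset.sum_eq_single_of_mem J' (Finset.mem_range.mpr (by omega)) fun l hl hlJ' => ?_]
  · rw [pd_bimono, pd_bimono, smul_mul_smul_comm, smul_smul, smul_smul, bimono_mul]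
    refine congr_arg₂ (· • ·) ?_ (by congr 1 <;> omega)
    rw [Nat.sub_sub_self hi, Nat.sub_self, Nat.sub_self, Nat.choose_symm hi]
    simp only [Nat.descFactorial_self, Nat.factorial_zero, biTCoeff]
    have hr : (r.choose i : ℂ) * i.factorial * (r - i).factorial = r.factorial := by
      exact_mod_cast Nat.choose_mul_factorial_mul_factorial hi
    have hs : (s.choose J' : ℂ) * J'.factorial * (s - J').factorial = s.factorial := by
      exact_mod_cast Nat.choose_mul_factorial_mul_factorial hJ'
    have hr₀ : (r.choose i : ℂ) ≠ 0 := by exact_mod_cast (Nat.choose_pos hi).ne'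
    have hs₀ : (s.choose J' : ℂ) ≠ 0 := by exact_mod_cast (Nat.choose_pos hJ').ne'
    rw [← hr, ← hs]
    push_cast
    field_simp [Nat.factorial_ne_zero]
  · have := Finset.mem_range.mp hl
    rw [pd_bimono_eq_zero _ _ _ _ _ _ _ _
      (.inr (Nat.descFactorial_mul_descFactorial_eq_zero (by omega) hlJ'.symm)), mul_zero,
      smul_zero]
  · have := Finset.mem_range.mp hk
    refine Finset.sum_eq_zero fun l _ => ?_
    rw [pd_bimono_eq_zero _ _ _ _ _ _ _ _
      (.inl (Nat.descFactorial_mul_descFactorial_eq_zero (by omega) (by omega))),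
      zero_mul, smul_zero]

theorem biT_sum_bimono (r s B i J' : ℕ) (J : ℕ → ℕ) (hi : i ≤ r) (hJ' : J' ≤ s) :
    biT r B r s r s (∑ i' ∈ Finset.range (r + 1), bimono i' (r - i') (J i') (B - J i'))
        (bimono (r - i) i J' (s - J')) =
      biTCoeff r s B i (J i) (B - J i) J' • bimono 0 0 (J i - (s - J')) (B - J i - J') := by
  rw [← biTₗ_apply, map_sum, LinearMap.sum_apply,
    Finset.sum_eq_single_of_mem i (Finset.mem_range.mpr (by omega)) fun i' hi' hne => ?_]
  · exact biT_bimono r s B i (J i) (B - J i) J' hi hJ'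
  · have := Finset.mem_range.mp hi'
    exact biT_bimono_eq_zero _ _ _ _ _ _ _ _ _ _ _ (by omega) (by omega) (by omega)

theorem Submodule.span_le_map_of_forall_smul_mem {K M N : Type*} [Field K] [AddCommGroup M]
    [Module K M] [AddCommGroup N] [Module K N] {f : M →ₗ[K] N} {p : Submodule K M} {s : Set N}
    (h : ∀ y ∈ s, ∃ c : K, c ≠ 0 ∧ c • y ∈ p.map f) : Submodule.span K s ≤ p.map f :=
  Submodule.span_le.mpr fun y hy => by
    obtain ⟨c, hc, hcy⟩ := h y hy
    exact (Submodule.smul_mem_iff _ hc).mp hcy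

theorem Vab_le_map_biT_sum (r s B : ℕ) (J : ℕ → ℕ) (hsB : s ≤ B)
    (hcover : ∀ j ≤ B - s, ∃ i ≤ r, j ≤ J i ∧ J i ≤ j + s) :
    Vab 0 (B - s) ≤ (Vab r s).map
      (biTₗ r B r s r s (∑ i ∈ Finset.range (r + 1), bimono i (r - i) (J i) (B - J i))) := by
  refine Submodule.span_le_map_of_forall_smul_mem ?_
  rintro _ ⟨i₀, hi₀, j, hj, rfl⟩
  obtain rfl : i₀ = 0 := by omega
  obtain ⟨i, hi, hjJ, hJj⟩ := hcover j hj
  have hG : bimono (r - i) i (j + s - J i) (s - (j + s - J i)) ∈ Vab r s :=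
    Submodule.subset_span
      ⟨r - i, by omega, j + s - J i, by omega, by rw [Nat.sub_sub_self hi]; rfl⟩
  refine ⟨biTCoeff r s B i (J i) (B - J i) (j + s - J i),
    biTCoeff_ne_zero _ _ _ _ _ _ _ hi (by omega) (by omega), _, hG, ?_⟩
  rw [biTₗ_apply, biT_sum_bimono r s B i _ J hi (by omega)]
  congr 2 <;> first | rfl | omega

noncomputable def formV (n : ℕ) : MvPolynomial (Fin 4) ℂ :=
  X 2 ^ n * X 3 ^ (4 * n + 2) * X 0 ^ 3 +
    X 2 ^ (2 * n + 1) * X 3 ^ (3 * n + 1) * (X 0 ^ 2 * X 1) +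
    X 2 ^ (3 * n + 1) * X 3 ^ (2 * n + 1) * (X 0 * X 1 ^ 2) +
    X 2 ^ (4 * n + 2) * X 3 ^ n * X 1 ^ 3

noncomputable def formW (n : ℕ) : MvPolynomial (Fin 4) ℂ :=
  X 3 ^ n * (X 0 ^ 2 * X 1) - X 2 ^ n * (X 0 * X 1 ^ 2)

def formVExp (n : ℕ) : ℕ → ℕ
  | 0 => 4 * n + 2
  | 1 => 3 * n + 1
  | 2 => 2 * n + 1
  | _ => n

theorem formV_eq_sum (n : ℕ) :
    formV n = ∑ i ∈ Finset.range 4,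
      bimono i (3 - i) (formVExp n i) (5 * n + 2 - formVExp n i) := by
  simp only [Finset.sum_range_succ, Finset.sum_range_zero, formVExp, formV, bimono]
  rw [show 5 * n + 2 - (4 * n + 2) = n by omega, show 5 * n + 2 - (3 * n + 1) = 2 * n + 1 by omega,
    show 5 * n + 2 - (2 * n + 1) = 3 * n + 1 by omega, show 5 * n + 2 - n = 4 * n + 2 by omega]
  ring

theorem formW_eq (n : ℕ) :
    formW n = bimono (3 - 1) 1 0 (n - 0) - bimono (3 - 2) 2 n (n - n) := by
  simp only [formW, bimono, Nat.sub_zero, Nat.sub_self]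
  ring

theorem biT_formV_formW {n : ℕ} (hn : Odd n) :
    biT 3 (5 * n + 2) 3 n 3 n (formV n) (formW n) = 0 := by
  rw [formV_eq_sum, formW_eq, ← biTₗ_apply, map_sub, biTₗ_apply, biTₗ_apply,
    biT_sum_bimono _ _ _ 1 _ _ (by norm_num) (by omega),
    biT_sum_bimono _ _ _ 2 _ _ (by norm_num) le_rfl, sub_eq_zero]
  simp only [formVExp]
  refine congr_arg₂ (· • ·) ?_ (by congr 1 <;> omega)
  simp only [biTCoeff, Nat.descFactorial_zero, show 5 * n + 2 - (3 * n + 1) = 2 * n + 1 by omega,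
    show 5 * n + 2 - (2 * n + 1) = 3 * n + 1 by omega, show 3 - 2 + n = n + 1 by omega,
    hn.add_one.neg_one_pow]
  norm_num

theorem Vab_le_map_biT_formV (n : ℕ) :
    Vab 0 (4 * n + 2) ≤ (Vab 3 n).map (biTₗ 3 (5 * n + 2) 3 n 3 n (formV n)) := by
  rw [formV_eq_sum, show 4 * n + 2 = 5 * n + 2 - n by omega]
  refine Vab_le_map_biT_sum 3 n (5 * n + 2) (formVExp n) (by omega) fun j hj => ?_
  by_cases h₃ : j ≤ n
  · exact ⟨3, le_rfl, by simp only [formVExp]; omega⟩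
  by_cases h₂ : j ≤ 2 * n + 1
  · exact ⟨2, by norm_num, by simp only [formVExp]; omega⟩
  by_cases h₁ : j ≤ 3 * n + 1
  · exact ⟨1, by norm_num, by simp only [formVExp]; omega⟩
  · exact ⟨0, by norm_num, by simp only [formVExp]; omega⟩

theorem biT_bimono_formW (n j : ℕ) (hj : j ≤ 4 * n + 2) :
    biT 3 (5 * n + 2) 3 n 3 n (bimono 2 (3 - 2) j (5 * n + 2 - j)) (formW n) =
      -biTCoeff 3 n (5 * n + 2) 2 j (5 * n + 2 - j) n • bimono 0 (0 - 0) j (4 * n + 2 - j) := by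
  rw [formW_eq, ← biTₗ_apply, map_sub, biTₗ_apply, biTₗ_apply,
    biT_bimono_eq_zero _ _ _ _ _ _ _ _ _ _ _ (by norm_num) (by norm_num) (by norm_num),
    biT_bimono _ _ _ _ _ _ _ (by norm_num) le_rfl, zero_sub, neg_smul]
  congr 3 <;> omega

theorem Vab_le_map_biT_formW (n : ℕ) :
    Vab 0 (4 * n + 2) ≤
      (Vab 3 (5 * n + 2)).map ((biTₗ 3 (5 * n + 2) 3 n 3 n).flip (formW n)) := by
  refine Submodule.span_le_map_of_forall_smul_mem ?_
  rintro _ ⟨i, hi, j, hj, rfl⟩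
  obtain rfl : i = 0 := by omega
  refine ⟨-biTCoeff 3 n (5 * n + 2) 2 j (5 * n + 2 - j) n,
    neg_ne_zero.mpr (biTCoeff_ne_zero _ _ _ _ _ _ _ (by norm_num) (by omega) (by omega)),
    bimono 2 (3 - 2) j (5 * n + 2 - j), Submodule.subset_span ⟨2, by norm_num, j, by omega, rfl⟩,
    biT_bimono_formW n j hj⟩

theorem case_b2_general (n : ℕ) (hn : Odd n) :
    biT 3 (5 * n + 2) 3 n 3 n
        (X 2 ^ n * X 3 ^ (4 * n + 2) * X 0 ^ 3 +
          X 2 ^ (2 * n + 1) * X 3 ^ (3 * n + 1) * (X 0 ^ 2 * X 1) +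
          X 2 ^ (3 * n + 1) * X 3 ^ (2 * n + 1) * (X 0 * X 1 ^ 2) +
          X 2 ^ (4 * n + 2) * X 3 ^ n * X 1 ^ 3)
        (X 3 ^ n * (X 0 ^ 2 * X 1) - X 2 ^ n * (X 0 * X 1 ^ 2)) = 0 ∧
    (∀ u ∈ Vab 0 (4 * n + 2), ∃ g ∈ Vab 3 n,
      biT 3 (5 * n + 2) 3 n 3 n
        (X 2 ^ n * X 3 ^ (4 * n + 2) * X 0 ^ 3 +
          X 2 ^ (2 * n + 1) * X 3 ^ (3 * n + 1) * (X 0 ^ 2 * X 1) +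
          X 2 ^ (3 * n + 1) * X 3 ^ (2 * n + 1) * (X 0 * X 1 ^ 2) +
          X 2 ^ (4 * n + 2) * X 3 ^ n * X 1 ^ 3)
        g = u) ∧
    (∀ u ∈ Vab 0 (4 * n + 2), ∃ p ∈ Vab 3 (5 * n + 2),
      biT 3 (5 * n + 2) 3 n 3 n p
        (X 3 ^ n * (X 0 ^ 2 * X 1) - X 2 ^ n * (X 0 * X 1 ^ 2)) = u) :=
  ⟨biT_formV_formW hn, fun _ hu => Vab_le_map_biT_formV n hu,
    fun _ hu => Vab_le_map_biT_formW n hu⟩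

/-- §4.3, case `b ≡ 2 (mod 5)`: for odd `n ≥ 3`, with
`v = XⁿY⁴ⁿ⁺² x³ + X²ⁿ⁺¹Y³ⁿ⁺¹ x²y + X³ⁿ⁺¹Y²ⁿ⁺¹ xy² + X⁴ⁿ⁺²Yⁿ y³ ∈ V_{3,5n+2}` and
`w = Yⁿ x²y − Xⁿ xy² ∈ V_{3,n}`, one has
(a) `T^{(3,n)}(v,w) = 0`;
(b) `T^{(3,n)}(v,·) : V_{3,n} → V_{0,4n+2}` is surjective;
(c) `T^{(3,n)}(·,w) : V_{3,5n+2} → V_{0,4n+2}` is surjective. -/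
theorem case_b2 (n : ℕ) (hn : Odd n) (hn3 : 3 ≤ n) :
    biT 3 (5 * n + 2) 3 n 3 n
        (X 2 ^ n * X 3 ^ (4 * n + 2) * X 0 ^ 3 +
          X 2 ^ (2 * n + 1) * X 3 ^ (3 * n + 1) * (X 0 ^ 2 * X 1) +
          X 2 ^ (3 * n + 1) * X 3 ^ (2 * n + 1) * (X 0 * X 1 ^ 2) +
          X 2 ^ (4 * n + 2) * X 3 ^ n * X 1 ^ 3)
        (X 3 ^ n * (X 0 ^ 2 * X 1) - X 2 ^ n * (X 0 * X 1 ^ 2)) = 0 ∧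
    (∀ u ∈ Vab 0 (4 * n + 2), ∃ g ∈ Vab 3 n,
      biT 3 (5 * n + 2) 3 n 3 n
        (X 2 ^ n * X 3 ^ (4 * n + 2) * X 0 ^ 3 +
          X 2 ^ (2 * n + 1) * X 3 ^ (3 * n + 1) * (X 0 ^ 2 * X 1) +
          X 2 ^ (3 * n + 1) * X 3 ^ (2 * n + 1) * (X 0 * X 1 ^ 2) +
          X 2 ^ (4 * n + 2) * X 3 ^ n * X 1 ^ 3)
        g = u) ∧
    (∀ u ∈ Vab 0 (4 * n + 2), ∃ p ∈ Vab 3 (5 * n + 2),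
      biT 3 (5 * n + 2) 3 n 3 n p
        (X 3 ^ n * (X 0 ^ 2 * X 1) - X 2 ^ n * (X 0 * X 1 ^ 2)) = u) :=
  case_b2_general n hn
end
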